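/- arXiv:2309.07865 — 4 statements merged into one kernel-verified Lean document; each statement's English description precedes it below -/
import Mathlib

section
/- Let A be an invertible n×n real matrix, d ∈ ℝⁿ with A d ≠ 0, F an n×n real matrix, r = A(I + F)d, w = A d, and α = ⟨r, w⟩ / ‖w‖². Then |α − 1| ≤ ‖A‖ · ‖A⁻¹‖ · ‖F‖, where matrix norms are operator norms induced by the Euclidean vector norm. That is, |α − 1| ≤ cond(A)·‖F‖ with cond(A) = ‖A‖‖A⁻¹‖ the condition number of A. -/
open scoped RealInnerProductSpace
open Matrix

/-!
With `w = A d` we have `r = w + A F d`, so `α - 1 = ⟨A F d, w⟩ / ‖w‖²`, and Cauchy–Schwarz bounds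
this by `‖A F d‖ / ‖w‖ ≤ ‖A‖ ‖F‖ ‖d‖ / ‖w‖`. Finally `d = A⁻¹ w` gives `‖d‖ ≤ ‖A⁻¹‖ ‖w‖`.
-/

section InnerProductSpace

variable {E : Type*} [NormedAddCommGroup E] [InnerProductSpace ℝ E]

theorem abs_inner_add_div_norm_sq_sub_one_le {w : E} (hw : w ≠ 0) (v : E) :
    |⟪w + v, w⟫ / ‖w‖ ^ 2 - 1| ≤ ‖v‖ / ‖w‖ := by
  have hw' : 0 < ‖w‖ := norm_pos_iff.mpr hw
  have hsub : ⟪w + v, w⟫ / ‖w‖ ^ 2 - 1 = ⟪v, w⟫ / ‖w‖ ^ 2 := by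
    rw [inner_add_left, real_inner_self_eq_norm_sq]
    field_simp
    ring
  rw [hsub, abs_div, abs_of_nonneg (sq_nonneg ‖w‖), div_le_div_iff₀ (by positivity) hw']
  calc |⟪v, w⟫| * ‖w‖ ≤ ‖v‖ * ‖w‖ * ‖w‖ := by gcongr; exact abs_real_inner_le_norm v w
    _ = ‖v‖ * ‖w‖ ^ 2 := by ring

theorem ContinuousLinearMap.norm_le_of_leftInverse {A B : E →L[ℝ] E}
    (hBA : ∀ x, B (A x) = x) (x : E) : ‖x‖ ≤ ‖B‖ * ‖A x‖ := by
  simpa only [hBA] using B.le_opNorm (A x)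

theorem abs_stepSize_sub_one_le {A B F : E →L[ℝ] E} (hBA : ∀ x, B (A x) = x) {d : E}
    (hd : A d ≠ 0) :
    |⟪A (d + F d), A d⟫ / ‖A d‖ ^ 2 - 1| ≤ ‖A‖ * ‖B‖ * ‖F‖ := by
  have hAd : 0 < ‖A d‖ := norm_pos_iff.mpr hd
  have hAFd : ‖A (F d)‖ ≤ ‖A‖ * ‖F‖ * (‖B‖ * ‖A d‖) :=
    calc ‖A (F d)‖ ≤ ‖A‖ * (‖F‖ * ‖d‖) := A.le_opNorm_of_le (F.le_opNorm d)
      _ = ‖A‖ * ‖F‖ * ‖d‖ := by ring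
      _ ≤ ‖A‖ * ‖F‖ * (‖B‖ * ‖A d‖) := by
        gcongr; exact ContinuousLinearMap.norm_le_of_leftInverse hBA d
  calc |⟪A (d + F d), A d⟫ / ‖A d‖ ^ 2 - 1|
      ≤ ‖A (F d)‖ / ‖A d‖ := by
        rw [map_add]; exact abs_inner_add_div_norm_sq_sub_one_le hd _
    _ ≤ ‖A‖ * ‖B‖ * ‖F‖ := by
        rw [div_le_iff₀ hAd]; linarith

end InnerProductSpace

/-- Let `A` be an invertible `n×n` real matrix, `d ∈ ℝⁿ` with `A d ≠ 0`,
`F` an `n×n` real matrix, `r = A (I + F) d`, `w = A d`, and `α = ⟨r, w⟩ / ‖w‖²`. Then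
`|α - 1| ≤ ‖A‖ ⬝ ‖A⁻¹‖ ⬝ ‖F‖ = cond(A) ‖F‖`, where matrix norms are the operator norms
induced by the Euclidean vector norm. -/
theorem stmt_10 {n : ℕ} (A : Matrix (Fin n) (Fin n) ℝ) (hA : IsUnit A)
    (d : EuclideanSpace ℝ (Fin n)) (hd : toEuclideanLin A d ≠ 0)
    (F : Matrix (Fin n) (Fin n) ℝ)
    (r w : EuclideanSpace ℝ (Fin n))
    (hrdef : r = toEuclideanLin (A * (1 + F)) d)
    (hwdef : w = toEuclideanLin A d)
    (α : ℝ) (hα : α = ⟪r, w⟫ / ‖w‖ ^ 2) :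
    |α - 1| ≤ ‖toEuclideanCLM (𝕜 := ℝ) A‖ * ‖toEuclideanCLM (𝕜 := ℝ) A⁻¹‖ *
      ‖toEuclideanCLM (𝕜 := ℝ) F‖ := by
  have hinv : ∀ x, toEuclideanCLM (𝕜 := ℝ) A⁻¹ (toEuclideanCLM (𝕜 := ℝ) A x) = x := fun x => by
    rw [← mul_apply_eq_comp, ← map_mul,
      nonsing_inv_mul A ((isUnit_iff_isUnit_det A).mp hA), map_one,
      one_apply_eq_self]
  have hr : toEuclideanLin (A * (1 + F)) d =
      toEuclideanCLM (𝕜 := ℝ) A (d + toEuclideanCLM (𝕜 := ℝ) F d) := by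
    change toEuclideanCLM (𝕜 := ℝ) (A * (1 + F)) d = _
    rw [map_mul, map_add, map_one]
    rfl
  subst hα hwdef hrdef
  rw [hr]
  exact abs_stepSize_sub_one_le hinv hd
end

section
/- Let A be an invertible n×n real matrix, x, xₘ, d ∈ ℝⁿ, F an n×n real matrix with operator norm ‖F‖ < 1, and α ∈ ℝ. Suppose A(I + F)d = A(x − xₘ) and xₘ₊₁ = xₘ + α d. Then ‖xₘ₊₁ − x‖ ≤ ((|α − 1| + ‖F‖) / (1 − ‖F‖)) · ‖xₘ − x‖. -/
open Matrix

/-!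
Cancelling the invertible `A` gives `d + F d = x - xₘ`. The reverse triangle inequality
then gives `(1 - ‖F‖) ‖d‖ ≤ ‖xₘ - x‖`, while the new error is
`xₘ₊₁ - x = (α - 1) d - F d`, of norm at most `(|α - 1| + ‖F‖) ‖d‖`.
-/

section NormedSpace

variable {E : Type*} [NormedAddCommGroup E] [NormedSpace ℝ E]

theorem ContinuousLinearMap.one_sub_opNorm_mul_norm_le_norm_add_apply (T : E →L[ℝ] E) (d : E) :
    (1 - ‖T‖) * ‖d‖ ≤ ‖d + T d‖ := by
  have h_triangle : ‖d‖ ≤ ‖d + T d‖ + ‖T d‖ := norm_le_add_norm_add d (T d)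
  have h_op : ‖T d‖ ≤ ‖T‖ * ‖d‖ := T.le_opNorm d
  linarith

theorem norm_add_smul_sub_le_of_add_apply_eq {T : E →L[ℝ] E} (hT : ‖T‖ < 1) {x y d : E}
    (hd : d + T d = x - y) (α : ℝ) :
    ‖y + α • d - x‖ ≤ (|α - 1| + ‖T‖) / (1 - ‖T‖) * ‖y - x‖ := by
  have h_gap : 0 < 1 - ‖T‖ := by linarith
  have h_err : y + α • d - x = (α - 1) • d - T d := by
    rw [show x = y + (d + T d) by rw [hd]; abel]
    module
  have h_d : (1 - ‖T‖) * ‖d‖ ≤ ‖y - x‖ := by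
    rw [norm_sub_rev, ← hd]
    exact T.one_sub_opNorm_mul_norm_le_norm_add_apply d
  rw [div_mul_eq_mul_div, le_div_iff₀ h_gap, h_err]
  calc ‖(α - 1) • d - T d‖ * (1 - ‖T‖)
      ≤ (|α - 1| * ‖d‖ + ‖T‖ * ‖d‖) * (1 - ‖T‖) := by
        gcongr
        refine (norm_sub_le _ _).trans (add_le_add ?_ (T.le_opNorm d))
        rw [norm_smul, Real.norm_eq_abs]
    _ = (|α - 1| + ‖T‖) * ((1 - ‖T‖) * ‖d‖) := by ring
    _ ≤ (|α - 1| + ‖T‖) * ‖y - x‖ := by gcongr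

end NormedSpace

theorem Matrix.add_toEuclideanCLM_apply_eq_of_toEuclideanLin_mul_one_add {n : Type*} [Fintype n]
    [DecidableEq n] {A : Matrix n n ℝ} (hA : IsUnit A) (F : Matrix n n ℝ)
    {d v : EuclideanSpace ℝ n} (h : toEuclideanLin (A * (1 + F)) d = toEuclideanLin A v) :
    d + toEuclideanCLM (𝕜 := ℝ) F d = v := by
  have h_inj : Function.Injective (toEuclideanCLM (𝕜 := ℝ) A) :=
    (ContinuousLinearMap.isUnit_iff_bijective.mp (hA.map toEuclideanCLM)).1
  change toEuclideanCLM (𝕜 := ℝ) (A * (1 + F)) d = toEuclideanCLM (𝕜 := ℝ) A v at h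
  rw [map_mul, map_add, map_one] at h
  apply h_inj
  simpa using h

/-- Let `A` be an invertible `n×n` real matrix, `x, xₘ, d ∈ ℝⁿ`, `F` an
`n×n` real matrix with operator norm `‖F‖ < 1`, and `α ∈ ℝ`. Suppose
`A (I + F) d = A (x - xₘ)` and `xₘ₊₁ = xₘ + α d`. Then
`‖xₘ₊₁ - x‖ ≤ ((|α - 1| + ‖F‖) / (1 - ‖F‖)) ⬝ ‖xₘ - x‖`. -/
theorem stmt_11 {n : ℕ} (A : Matrix (Fin n) (Fin n) ℝ) (hA : IsUnit A)
    (x xm d : EuclideanSpace ℝ (Fin n)) (F : Matrix (Fin n) (Fin n) ℝ)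
    (hF : ‖toEuclideanCLM (𝕜 := ℝ) F‖ < 1) (α : ℝ)
    (hd : toEuclideanLin (A * (1 + F)) d = toEuclideanLin A (x - xm))
    (xm1 : EuclideanSpace ℝ (Fin n)) (hup : xm1 = xm + α • d) :
    ‖xm1 - x‖ ≤ ((|α - 1| + ‖toEuclideanCLM (𝕜 := ℝ) F‖) /
      (1 - ‖toEuclideanCLM (𝕜 := ℝ) F‖)) * ‖xm - x‖ := by
  subst hup
  exact norm_add_smul_sub_le_of_add_apply_eq hF
    (add_toEuclideanCLM_apply_eq_of_toEuclideanLin_mul_one_add hA F hd) α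
end

section
/- Let A be an invertible n×n real matrix, x, xₘ, d ∈ ℝⁿ with A d ≠ 0, and F an n×n real matrix with operator norm ‖F‖ < 1. Suppose A(I + F)d = A(x − xₘ), r = A(x − xₘ), w = A d, α = ⟨r, w⟩/‖w‖², and xₘ₊₁ = xₘ + α d. Then ‖xₘ₊₁ − x‖ ≤ ((1 + ‖A‖‖A⁻¹‖) ‖F‖ / (1 − ‖F‖)) · ‖xₘ − x‖. -/
/-!
Write `e = x - xₘ`. The model equation says `d + F d = e`, so `‖d‖ ≤ ‖e‖ / (1 - ‖F‖)`, and the new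
error is `xₘ₊₁ - x = (α - 1) d - F d`. The step size `α` is the coefficient of the orthogonal
projection of `r = w + A (F d)` onto `w = A d`, so `|α - 1| ≤ ‖A (F d)‖ / ‖w‖`; together with
`‖d‖ ≤ ‖A⁻¹‖ ‖w‖` this gives `|α - 1| ‖d‖ ≤ ‖A‖ ‖A⁻¹‖ ‖F‖ ‖d‖`.
-/

open scoped RealInnerProductSpace
open Matrix

theorem norm_le_div_one_sub_of_add_apply_eq {𝕜 V : Type*} [NontriviallyNormedField 𝕜]
    [SeminormedAddCommGroup V] [NormedSpace 𝕜 V] {F : V →L[𝕜] V} (hF : ‖F‖ < 1) {d e : V}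
    (h : d + F d = e) : ‖d‖ ≤ ‖e‖ / (1 - ‖F‖) := by
  rw [le_div_iff₀ (sub_pos.mpr hF)]
  have : ‖d‖ ≤ ‖e‖ + ‖F‖ * ‖d‖ :=
    calc ‖d‖ = ‖e - F d‖ := by rw [← h, add_sub_cancel_right]
      _ ≤ ‖e‖ + ‖F d‖ := norm_sub_le _ _
      _ ≤ ‖e‖ + ‖F‖ * ‖d‖ := by gcongr; exact F.le_opNorm d
  linarith

section Refinement

variable {E : Type*} [NormedAddCommGroup E] [InnerProductSpace ℝ E]

theorem abs_inner_div_norm_sq_sub_one_le {r w : E} (hw : w ≠ 0) :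
    |⟪r, w⟫ / ‖w‖ ^ 2 - 1| ≤ ‖r - w‖ / ‖w‖ := by
  have hw' : 0 < ‖w‖ := norm_pos_iff.mpr hw
  have hsub : ⟪r, w⟫ / ‖w‖ ^ 2 - 1 = ⟪r - w, w⟫ / ‖w‖ ^ 2 := by
    rw [inner_sub_left, real_inner_self_eq_norm_sq, sub_div, div_self (by positivity)]
  rw [hsub, abs_div, abs_of_nonneg (sq_nonneg ‖w‖), div_le_div_iff₀ (by positivity) hw']
  calc |⟪r - w, w⟫| * ‖w‖ ≤ ‖r - w‖ * ‖w‖ * ‖w‖ := by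
        gcongr; exact abs_real_inner_le_norm _ _
    _ = ‖r - w‖ * ‖w‖ ^ 2 := by ring

theorem abs_inner_div_norm_sq_sub_one_mul_norm_le {A B F : E →L[ℝ] E}
    (hBA : ∀ v, B (A v) = v) {d : E} (hd : A d ≠ 0) :
    |⟪A (d + F d), A d⟫ / ‖A d‖ ^ 2 - 1| * ‖d‖ ≤ ‖A‖ * ‖B‖ * ‖F‖ * ‖d‖ := by
  have hw : 0 < ‖A d‖ := norm_pos_iff.mpr hd
  have hres : A (d + F d) - A d = A (F d) := by rw [map_add, add_sub_cancel_left]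
  calc |⟪A (d + F d), A d⟫ / ‖A d‖ ^ 2 - 1| * ‖d‖
      ≤ ‖A (F d)‖ / ‖A d‖ * (‖B‖ * ‖A d‖) := by
        gcongr
        · simpa only [hres] using abs_inner_div_norm_sq_sub_one_le (r := A (d + F d)) hd
        · simpa only [hBA] using B.le_opNorm (A d)
    _ = ‖B‖ * ‖A (F d)‖ := by field_simp
    _ ≤ ‖B‖ * (‖A‖ * (‖F‖ * ‖d‖)) := by gcongr; exact A.le_opNorm_of_le (F.le_opNorm d)
    _ = ‖A‖ * ‖B‖ * ‖F‖ * ‖d‖ := by ring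

theorem norm_add_inner_div_norm_sq_smul_sub_le {A B F : E →L[ℝ] E} (hBA : ∀ v, B (A v) = v)
    (hF : ‖F‖ < 1) {x xm d : E} (hd : A d ≠ 0) (hdF : d + F d = x - xm) :
    ‖xm + (⟪A (x - xm), A d⟫ / ‖A d‖ ^ 2) • d - x‖ ≤
      (1 + ‖A‖ * ‖B‖) * ‖F‖ / (1 - ‖F‖) * ‖xm - x‖ := by
  set α := ⟪A (x - xm), A d⟫ / ‖A d‖ ^ 2 with hα
  have herr : xm + α • d - x = (α - 1) • d - F d := by
    rw [sub_smul, one_smul]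
    linear_combination (norm := module) hdF
  have hαd : |α - 1| * ‖d‖ ≤ ‖A‖ * ‖B‖ * ‖F‖ * ‖d‖ := by
    rw [hα, ← hdF]; exact abs_inner_div_norm_sq_sub_one_mul_norm_le hBA hd
  have hdle : ‖d‖ ≤ ‖xm - x‖ / (1 - ‖F‖) := by
    rw [norm_sub_rev]; exact norm_le_div_one_sub_of_add_apply_eq hF hdF
  calc ‖xm + α • d - x‖ ≤ |α - 1| * ‖d‖ + ‖F‖ * ‖d‖ := by
        rw [herr, ← Real.norm_eq_abs, ← norm_smul]
        exact (norm_sub_le _ _).trans (by gcongr; exact F.le_opNorm d)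
    _ ≤ (1 + ‖A‖ * ‖B‖) * ‖F‖ * ‖d‖ := by linarith
    _ ≤ (1 + ‖A‖ * ‖B‖) * ‖F‖ * (‖xm - x‖ / (1 - ‖F‖)) := by gcongr
    _ = (1 + ‖A‖ * ‖B‖) * ‖F‖ / (1 - ‖F‖) * ‖xm - x‖ := by ring

end Refinement

theorem Matrix.toEuclideanCLM_inv_apply_toEuclideanCLM_apply {ι : Type*} [Fintype ι]
    [DecidableEq ι] {A : Matrix ι ι ℝ} (hA : IsUnit A) (v : EuclideanSpace ℝ ι) :
    toEuclideanCLM (𝕜 := ℝ) A⁻¹ (toEuclideanCLM (𝕜 := ℝ) A v) = v := by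
  rw [← mul_apply_eq_comp, ← map_mul,
    nonsing_inv_mul _ ((isUnit_iff_isUnit_det A).mp hA), map_one]
  rfl

/-- Let `A` be an invertible `n×n` real matrix, `x, xₘ, d ∈ ℝⁿ` with
`A d ≠ 0`, and `F` an `n×n` real matrix with operator norm `‖F‖ < 1`. Suppose
`A (I + F) d = A (x - xₘ)`, `r = A (x - xₘ)`, `w = A d`, `α = ⟨r, w⟩ / ‖w‖²`, and
`xₘ₊₁ = xₘ + α d`. Then
`‖xₘ₊₁ - x‖ ≤ ((1 + ‖A‖ ‖A⁻¹‖) ‖F‖ / (1 - ‖F‖)) ⬝ ‖xₘ - x‖`. -/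
theorem stmt_12 {n : ℕ} (A : Matrix (Fin n) (Fin n) ℝ) (hA : IsUnit A)
    (x xm d : EuclideanSpace ℝ (Fin n)) (hd : toEuclideanLin A d ≠ 0)
    (F : Matrix (Fin n) (Fin n) ℝ) (hF : ‖toEuclideanCLM (𝕜 := ℝ) F‖ < 1)
    (hFd : toEuclideanLin (A * (1 + F)) d = toEuclideanLin A (x - xm))
    (r w : EuclideanSpace ℝ (Fin n))
    (hrdef : r = toEuclideanLin A (x - xm))
    (hwdef : w = toEuclideanLin A d)
    (α : ℝ) (hα : α = ⟪r, w⟫ / ‖w‖ ^ 2)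
    (xm1 : EuclideanSpace ℝ (Fin n)) (hup : xm1 = xm + α • d) :
    ‖xm1 - x‖ ≤ ((1 + ‖toEuclideanCLM (𝕜 := ℝ) A‖ * ‖toEuclideanCLM (𝕜 := ℝ) A⁻¹‖) *
      ‖toEuclideanCLM (𝕜 := ℝ) F‖ / (1 - ‖toEuclideanCLM (𝕜 := ℝ) F‖)) * ‖xm - x‖ := by
  have hinv := toEuclideanCLM_inv_apply_toEuclideanCLM_apply hA
  have hdF : d + toEuclideanCLM (𝕜 := ℝ) F d = x - xm := by
    change toEuclideanCLM (𝕜 := ℝ) (A * (1 + F)) d = toEuclideanCLM (𝕜 := ℝ) A (x - xm) at hFd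
    rw [map_mul, mul_apply_eq_comp] at hFd
    simpa [hinv] using congrArg (toEuclideanCLM (𝕜 := ℝ) A⁻¹) hFd
  subst hup hα hrdef hwdef
  exact norm_add_inner_div_norm_sq_smul_sub_le hinv hF hd hdF
end

section
/- Let A be an invertible n×n real matrix and b ∈ ℝⁿ, with exact solution x = A⁻¹b. Let ε be a real number with 0 ≤ ε < 1/(2 + ‖A‖‖A⁻¹‖). Suppose sequences (xₘ), (dₘ) in ℝⁿ and (Fₘ) of n×n real matrices satisfy, for every m: (i) A(I + Fₘ)dₘ = rₘ where rₘ = b − A xₘ; (ii) ‖Fₘ‖ ≤ ε (operator norm induced by the Euclidean norm); and (iii) xₘ₊₁ = xₘ + αₘ dₘ where αₘ = ⟨rₘ, A dₘ⟩/‖A dₘ‖² if A dₘ ≠ 0 and αₘ = 0 otherwise. Then for every m, ‖xₘ − x‖ ≤ ρᵐ ‖x₀ − x‖ with ρ = (1 + ‖A‖‖A⁻¹‖)ε/(1 − ε) < 1; in particular, xₘ converges to x. -/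
open scoped RealInnerProductSpace
open Matrix

/-! The error `eₘ = xₘ - x` satisfies `dₘ + Fₘ dₘ = -eₘ`, so `(1 - ε)‖dₘ‖ ≤ ‖eₘ‖`. The line search
makes the new residual `rₘ - αₘ A dₘ = -A eₘ₊₁` no longer than `rₘ - A dₘ = A Fₘ dₘ`, whence
`‖eₘ₊₁‖ ≤ ‖A⁻¹‖‖A‖ε‖dₘ‖ ≤ cond(A) ε/(1 - ε) ‖eₘ‖`, a contraction factor below `ρ`. -/

section LineSearch

variable {E : Type*} [NormedAddCommGroup E]

/-- With `w = 0` the second case also reads `a = ⟪r, w⟫ / ‖w‖ ^ 2`, as `x / 0 = 0`. -/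
theorem eq_inner_div_norm_sq_of_cases [InnerProductSpace ℝ E] {r w : E} {a : ℝ}
    (h : (w ≠ 0 → a = ⟪r, w⟫ / ‖w‖ ^ 2) ∧ (w = 0 → a = 0)) : a = ⟪r, w⟫ / ‖w‖ ^ 2 := by
  by_cases hw : w = 0
  · simp [h.2 hw, hw]
  · exact h.1 hw

/-- For `w = 0` the step is `0` (as `x / 0 = 0`), and both sides agree. -/
theorem norm_sub_lineSearch_smul_le [InnerProductSpace ℝ E] (r w : E) :
    ‖r - (⟪r, w⟫ / ‖w‖ ^ 2) • w‖ ≤ ‖r - w‖ := by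
  rcases eq_or_ne w 0 with rfl | hw
  · simp
  have hw2 : 0 < ‖w‖ ^ 2 := by positivity
  set t := ⟪r, w⟫ / ‖w‖ ^ 2
  have ht : t * ‖w‖ ^ 2 = ⟪r, w⟫ := div_mul_cancel₀ _ hw2.ne'
  have hsq : ‖r - t • w‖ ^ 2 ≤ ‖r - w‖ ^ 2 := by
    rw [norm_sub_sq_real, norm_sub_sq_real, real_inner_smul_right, norm_smul, mul_pow,
      Real.norm_eq_abs, sq_abs]
    nlinarith [mul_nonneg hw2.le (sq_nonneg (t - 1))]
  exact (pow_le_pow_iff_left₀ (norm_nonneg _) (norm_nonneg _) two_ne_zero).mp hsq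

theorem one_sub_mul_norm_le_norm_add_apply [NormedSpace ℝ E] {G : E →L[ℝ] E} {ε : ℝ}
    (hG : ‖G‖ ≤ ε) (v : E) : (1 - ε) * ‖v‖ ≤ ‖v + G v‖ := by
  have hGv : ‖G v‖ ≤ ε * ‖v‖ := G.le_of_opNorm_le hG v
  have htri : ‖v‖ ≤ ‖v + G v‖ + ‖G v‖ := by
    simpa using norm_sub_le (v + G v) (G v)
  linarith

/-- One step of line-search refinement for `T x = b`, written for the error `e = x - T⁻¹ b`, whose
residual is `-T e`, and a direction `d` solving the perturbed system `T (I + G) d = -T e`. -/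
theorem norm_add_lineSearch_smul_le [InnerProductSpace ℝ E] {T Ti G : E →L[ℝ] E}
    (hTi : ∀ v, Ti (T v) = v) {ε : ℝ} (hG : ‖G‖ ≤ ε) (hε : ε < 1) {e d : E}
    (hd : T (d + G d) = -T e) :
    ‖e + (⟪-T e, T d⟫ / ‖T d‖ ^ 2) • d‖ ≤ ‖T‖ * ‖Ti‖ * ε / (1 - ε) * ‖e‖ := by
  set α := ⟪-T e, T d⟫ / ‖T d‖ ^ 2
  have hε0 : 0 ≤ ε := (norm_nonneg G).trans hG
  have h1ε : 0 < 1 - ε := sub_pos.mpr hε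
  have hde : d + G d = -e := by simpa [hTi] using congrArg Ti hd
  have hd_le : (1 - ε) * ‖d‖ ≤ ‖e‖ := by
    simpa [hde] using one_sub_mul_norm_le_norm_add_apply hG d
  have hnew : e + α • d = -Ti (-T e - α • T d) := by simp [hTi, add_comm]
  have hres : -T e - T d = T (G d) := by rw [← hd, map_add]; abel
  calc ‖e + α • d‖ = ‖Ti (-T e - α • T d)‖ := by rw [hnew, norm_neg]
    _ ≤ ‖Ti‖ * ‖T (G d)‖ :=
      (Ti.le_opNorm _).trans <| by gcongr; rw [← hres]; exact norm_sub_lineSearch_smul_le _ _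
    _ ≤ ‖Ti‖ * (‖T‖ * (ε * ‖d‖)) := by
      gcongr; exact (T.le_opNorm _).trans (by gcongr; exact G.le_of_opNorm_le hG d)
    _ = ‖T‖ * ‖Ti‖ * ε / (1 - ε) * ((1 - ε) * ‖d‖) := by field_simp
    _ ≤ ‖T‖ * ‖Ti‖ * ε / (1 - ε) * ‖e‖ := by gcongr

end LineSearch

namespace Matrix

variable {𝕜 ι : Type*} [RCLike 𝕜] [Fintype ι] [DecidableEq ι] {A : Matrix ι ι 𝕜}

theorem toEuclideanCLM_nonsing_inv_apply_apply (hA : IsUnit A) (v : EuclideanSpace 𝕜 ι) :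
    toEuclideanCLM (𝕜 := 𝕜) A⁻¹ (toEuclideanCLM (𝕜 := 𝕜) A v) = v := by
  rw [← mul_apply_eq_comp, ← map_mul,
    nonsing_inv_mul _ ((isUnit_iff_isUnit_det A).mp hA), map_one, one_apply_eq_self]

theorem toEuclideanCLM_apply_nonsing_inv_apply (hA : IsUnit A) (v : EuclideanSpace 𝕜 ι) :
    toEuclideanCLM (𝕜 := 𝕜) A (toEuclideanCLM (𝕜 := 𝕜) A⁻¹ v) = v := by
  rw [← mul_apply_eq_comp, ← map_mul,
    mul_nonsing_inv _ ((isUnit_iff_isUnit_det A).mp hA), map_one, one_apply_eq_self]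

theorem toEuclideanLin_mul_one_add_apply (A F : Matrix ι ι 𝕜) (v : EuclideanSpace 𝕜 ι) :
    toEuclideanLin (A * (1 + F)) v =
      toEuclideanCLM (𝕜 := 𝕜) A (v + toEuclideanCLM (𝕜 := 𝕜) F v) := by
  change toEuclideanCLM (𝕜 := 𝕜) (A * (1 + F)) v = _
  rw [map_mul, map_add, map_one]
  rfl

end Matrix

theorem tendsto_of_norm_sub_le_pow_mul {E : Type*} [SeminormedAddCommGroup E] {u : ℕ → E} {l : E}
    {ρ C : ℝ} (hρ0 : 0 ≤ ρ) (hρ1 : ρ < 1) (h : ∀ m, ‖u m - l‖ ≤ ρ ^ m * C) :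
    Filter.Tendsto u Filter.atTop (nhds l) := by
  rw [tendsto_iff_norm_sub_tendsto_zero]
  refine squeeze_zero (fun m ↦ norm_nonneg _) h ?_
  simpa using (tendsto_pow_atTop_nhds_zero_of_lt_one hρ0 hρ1).mul_const C

theorem one_add_mul_div_one_sub_lt_one {K ε : ℝ} (hK : 0 ≤ K) (hε : ε < 1 / (2 + K)) :
    (1 + K) * ε / (1 - ε) < 1 := by
  have hεK : ε * (2 + K) < 1 := (lt_div_iff₀ (by positivity)).mp (by simpa using hε)
  have h1ε : 0 < 1 - ε := by nlinarith
  rw [div_lt_one h1ε]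
  linarith

/-- Let `A` be an invertible `n×n` real matrix, `b ∈ ℝⁿ`, with exact
solution `x = A⁻¹ b`, and let `0 ≤ ε < 1/(2 + ‖A‖‖A⁻¹‖)`. Suppose for every `m`:
(i) `A (I + Fₘ) dₘ = rₘ` with `rₘ = b - A xₘ`; (ii) `‖Fₘ‖ ≤ ε`; and
(iii) `xₘ₊₁ = xₘ + αₘ dₘ` with `αₘ = ⟨rₘ, A dₘ⟩/‖A dₘ‖²` if `A dₘ ≠ 0`, else `αₘ = 0`.
Then `‖xₘ - x‖ ≤ ρᵐ ‖x₀ - x‖` with `ρ = (1 + ‖A‖‖A⁻¹‖) ε/(1 - ε) < 1`; in particular,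
`xₘ → x`. -/
theorem stmt_14 {n : ℕ} (A : Matrix (Fin n) (Fin n) ℝ) (hA : IsUnit A)
    (b : EuclideanSpace ℝ (Fin n)) (xsol : EuclideanSpace ℝ (Fin n))
    (hxsol : xsol = toEuclideanLin A⁻¹ b)
    (ε : ℝ) (hε0 : 0 ≤ ε)
    (hε1 : ε < 1 / (2 + ‖toEuclideanCLM (𝕜 := ℝ) A‖ * ‖toEuclideanCLM (𝕜 := ℝ) A⁻¹‖))
    (x d : ℕ → EuclideanSpace ℝ (Fin n)) (F : ℕ → Matrix (Fin n) (Fin n) ℝ)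
    (r : ℕ → EuclideanSpace ℝ (Fin n)) (α : ℕ → ℝ)
    (hr : ∀ m, r m = b - toEuclideanLin A (x m))
    (hFd : ∀ m, toEuclideanLin (A * (1 + F m)) (d m) = r m)
    (hF : ∀ m, ‖toEuclideanCLM (𝕜 := ℝ) (F m)‖ ≤ ε)
    (hα : ∀ m, (toEuclideanLin A (d m) ≠ 0 →
        α m = ⟪r m, toEuclideanLin A (d m)⟫ / ‖toEuclideanLin A (d m)‖ ^ 2) ∧
      (toEuclideanLin A (d m) = 0 → α m = 0))
    (hx : ∀ m, x (m + 1) = x m + α m • d m) :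
    ((1 + ‖toEuclideanCLM (𝕜 := ℝ) A‖ * ‖toEuclideanCLM (𝕜 := ℝ) A⁻¹‖) * ε / (1 - ε) < 1) ∧
    (∀ m, ‖x m - xsol‖ ≤
      ((1 + ‖toEuclideanCLM (𝕜 := ℝ) A‖ * ‖toEuclideanCLM (𝕜 := ℝ) A⁻¹‖) * ε / (1 - ε)) ^ m *
        ‖x 0 - xsol‖) ∧
    Filter.Tendsto x Filter.atTop (nhds xsol) := by
  set T := toEuclideanCLM (𝕜 := ℝ) A
  set Ti := toEuclideanCLM (𝕜 := ℝ) A⁻¹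
  set ρ := (1 + ‖T‖ * ‖Ti‖) * ε / (1 - ε) with hρ
  have hK : 0 ≤ ‖T‖ * ‖Ti‖ := by positivity
  have hε : ε < 1 := hε1.trans_le ((div_le_one (by positivity)).mpr (by linarith))
  have hρ0 : 0 ≤ ρ := div_nonneg (by positivity) (sub_pos.mpr hε).le
  have hρ1 : ρ < 1 := one_add_mul_div_one_sub_lt_one hK hε1
  have hb : T xsol = b := hxsol ▸ toEuclideanCLM_apply_nonsing_inv_apply hA b
  have hstep : ∀ m, ‖x (m + 1) - xsol‖ ≤ ρ * ‖x m - xsol‖ := by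
    intro m
    have hres : r m = -T (x m - xsol) := by
      rw [hr m, map_sub, ← hb]; exact (neg_sub _ _).symm
    have hdir : T (d m + toEuclideanCLM (𝕜 := ℝ) (F m) (d m)) = -T (x m - xsol) := by
      rw [← hres, ← hFd m, toEuclideanLin_mul_one_add_apply]
    calc ‖x (m + 1) - xsol‖
        = ‖(x m - xsol) + (⟪-T (x m - xsol), T (d m)⟫ / ‖T (d m)‖ ^ 2) • d m‖ := by
          rw [hx m, eq_inner_div_norm_sq_of_cases (hα m), hres, sub_add_eq_add_sub]; rfl
      _ ≤ ‖T‖ * ‖Ti‖ * ε / (1 - ε) * ‖x m - xsol‖ :=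
          norm_add_lineSearch_smul_le (toEuclideanCLM_nonsing_inv_apply_apply hA) (hF m) hε hdir
      _ ≤ ρ * ‖x m - xsol‖ := by rw [hρ]; gcongr; linarith
  have hbound : ∀ m, ‖x m - xsol‖ ≤ ρ ^ m * ‖x 0 - xsol‖ :=
    fun m ↦ le_geom (u := fun m ↦ ‖x m - xsol‖) hρ0 m fun k _ ↦ hstep k
  exact ⟨hρ1, hbound, tendsto_of_norm_sub_le_pow_mul hρ0 hρ1 hbound⟩
end
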